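/- Let D = ℂ² with the associative multiplication (a1,a2)·(b1,b2) = (a1 b1, a2 b1) (or, respectively, (a1,a2)·(b1,b2) = (a1 b1, a1 b2)). Then Ker μ3 = (Ker μ2) ⊗ D + D ⊗ (Ker μ2), where μ2 : D ⊗ D → D and μ3 : D ⊗ D ⊗ D → D are the linear maps induced by multiplication (μ2(x⊗y) = xy, μ3(x⊗y⊗z) = xyz), and both summands on the right are regarded as subspaces of D ⊗ D ⊗ D. -/
import Mathlib


open TensorProduct

namespace Stmt18

set_option synthInstance.maxHeartbeats 1000000
set_option maxHeartbeats 2000000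

/-- The carrier `ℂ²` of the algebras `D₃`, `D₄`. -/
abbrev V : Type := Fin 2 → ℂ

/-- The multiplication of `D₃`: `(a1,a2)·(b1,b2) = (a1 b1, a2 b1)`, i.e. `a * b = b 0 • a`. -/
noncomputable def mulD3 : V →ₗ[ℂ] V →ₗ[ℂ] V :=
  LinearMap.mk₂ ℂ (fun a b => b 0 • a)
    (fun a a' b => smul_add (b 0) a a')
    (fun c a b => smul_comm (b 0) c a)
    (fun a b b' => by simp [add_smul])
    (fun c a b => by simp [mul_smul])

/-- The multiplication of `D₄`: `(a1,a2)·(b1,b2) = (a1 b1, a1 b2)`, i.e. `a * b = a 0 • b`. -/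
noncomputable def mulD4 : V →ₗ[ℂ] V →ₗ[ℂ] V :=
  LinearMap.mk₂ ℂ (fun a b => a 0 • b)
    (fun a a' b => by simp [add_smul])
    (fun c a b => by simp [mul_smul])
    (fun a b b' => smul_add _ b b')
    (fun c a b => smul_comm _ c b)

/-- `μ₂ : D ⊗ D → D`. -/
noncomputable def mu2 (m : V →ₗ[ℂ] V →ₗ[ℂ] V) : (V ⊗[ℂ] V) →ₗ[ℂ] V :=
  TensorProduct.lift m

/-- `μ₃ : (D ⊗ D) ⊗ D → D`. -/
noncomputable def mu3 (m : V →ₗ[ℂ] V →ₗ[ℂ] V) : ((V ⊗[ℂ] V) ⊗[ℂ] V) →ₗ[ℂ] V :=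
  (mu2 m).comp (TensorProduct.map (mu2 m) (LinearMap.id : V →ₗ[ℂ] V))

/-- The property `Ker μ₃ = (Ker μ₂) ⊗ D + D ⊗ (Ker μ₂)` inside `(D ⊗ D) ⊗ D`. -/
def KerProp (m : V →ₗ[ℂ] V →ₗ[ℂ] V) : Prop :=
  LinearMap.ker (mu3 m) =
    LinearMap.range (TensorProduct.mapIncl (LinearMap.ker (mu2 m))
        (⊤ : Submodule ℂ V)) ⊔
      Submodule.map (TensorProduct.assoc ℂ V V V).symm.toLinearMap
        (LinearMap.range (TensorProduct.mapIncl (⊤ : Submodule ℂ V)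
          (LinearMap.ker (mu2 m))))

/-- The right-hand side submodule. -/
noncomputable def RHS (m : V →ₗ[ℂ] V →ₗ[ℂ] V) : Submodule ℂ ((V ⊗[ℂ] V) ⊗[ℂ] V) :=
  LinearMap.range (TensorProduct.mapIncl (LinearMap.ker (mu2 m))
      (⊤ : Submodule ℂ V)) ⊔
    Submodule.map (TensorProduct.assoc ℂ V V V).symm.toLinearMap
      (LinearMap.range (TensorProduct.mapIncl (⊤ : Submodule ℂ V)
        (LinearMap.ker (mu2 m))))

noncomputable def e0 : V := Pi.single 0 1

lemma e0_zero : e0 0 = 1 := by simp [e0]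

lemma mu2_D3 (x y : V) : mu2 mulD3 (x ⊗ₜ y) = y 0 • x := by simp [mu2, mulD3]

lemma mu2_D4 (x y : V) : mu2 mulD4 (x ⊗ₜ y) = x 0 • y := by simp [mu2, mulD4]

lemma mu3_D3 (x y z : V) : mu3 mulD3 ((x ⊗ₜ[ℂ] y) ⊗ₜ[ℂ] z) = (z 0 * y 0) • x := by
  simp only [mu3, mu2, LinearMap.comp_apply, map_tmul, lift.tmul, LinearMap.id_apply,
    mulD3, LinearMap.mk₂_apply, Pi.smul_apply, smul_eq_mul, smul_smul]

lemma mu3_D4 (x y z : V) : mu3 mulD4 ((x ⊗ₜ[ℂ] y) ⊗ₜ[ℂ] z) = (x 0 * y 0) • z := by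
  simp only [mu3, mu2, LinearMap.comp_apply, map_tmul, lift.tmul, LinearMap.id_apply,
    mulD4, LinearMap.mk₂_apply, Pi.smul_apply, smul_eq_mul, smul_smul]

lemma mem1 (m : V →ₗ[ℂ] V →ₗ[ℂ] V) {a : V ⊗[ℂ] V} (ha : a ∈ LinearMap.ker (mu2 m)) (z : V) :
    a ⊗ₜ[ℂ] z ∈ LinearMap.range
      (TensorProduct.mapIncl (LinearMap.ker (mu2 m)) (⊤ : Submodule ℂ V)) :=
  ⟨(⟨a, ha⟩ : LinearMap.ker (mu2 m)) ⊗ₜ (⟨z, trivial⟩ : (⊤ : Submodule ℂ V)),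
    by simp [mapIncl]⟩

lemma mem2 (m : V →ₗ[ℂ] V →ₗ[ℂ] V) (x : V) {s : V ⊗[ℂ] V} (hs : s ∈ LinearMap.ker (mu2 m)) :
    (TensorProduct.assoc ℂ V V V).symm (x ⊗ₜ[ℂ] s) ∈
      Submodule.map (TensorProduct.assoc ℂ V V V).symm.toLinearMap
        (LinearMap.range (TensorProduct.mapIncl (⊤ : Submodule ℂ V)
          (LinearMap.ker (mu2 m)))) :=
  ⟨x ⊗ₜ s, ⟨(⟨x, trivial⟩ : (⊤ : Submodule ℂ V)) ⊗ₜ ⟨s, hs⟩, by simp [mapIncl]⟩, rfl⟩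

lemma sup1_le (m : V →ₗ[ℂ] V →ₗ[ℂ] V) :
    LinearMap.range (TensorProduct.mapIncl (LinearMap.ker (mu2 m)) (⊤ : Submodule ℂ V)) ≤
      LinearMap.ker (mu3 m) := by
  rintro _ ⟨u, rfl⟩
  rw [LinearMap.mem_ker]
  induction u using TensorProduct.induction_on with
  | zero => rw [map_zero, map_zero]
  | add a b ha hb => rw [map_add, map_add, ha, hb, add_zero]
  | tmul a z =>
    obtain ⟨a, ha⟩ := a
    simp only [mapIncl, map_tmul, Submodule.coe_subtype]
    simp [mu3, LinearMap.mem_ker.mp ha]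

lemma L_D3 (x : V) (s : V ⊗[ℂ] V) :
    mu3 mulD3 ((TensorProduct.assoc ℂ V V V).symm (x ⊗ₜ[ℂ] s)) = (mu2 mulD3 s) 0 • x := by
  induction s using TensorProduct.induction_on with
  | zero => rw [tmul_zero, map_zero, map_zero, map_zero]; simp
  | add a b ha hb =>
    rw [tmul_add, map_add, map_add, ha, hb, map_add, Pi.add_apply, add_smul]
  | tmul y z =>
    rw [TensorProduct.assoc_symm_tmul, mu3_D3, mu2_D3]
    simp [mul_comm]

lemma L_D4 (x : V) (s : V ⊗[ℂ] V) :
    mu3 mulD4 ((TensorProduct.assoc ℂ V V V).symm (x ⊗ₜ[ℂ] s)) = x 0 • (mu2 mulD4 s) := by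
  induction s using TensorProduct.induction_on with
  | zero => rw [tmul_zero, map_zero, map_zero, map_zero]; simp
  | add a b ha hb =>
    rw [tmul_add, map_add, map_add, ha, hb, map_add, smul_add]
  | tmul y z =>
    rw [TensorProduct.assoc_symm_tmul, mu3_D4, mu2_D4, smul_smul]

lemma sup2_le_D3 :
    Submodule.map (TensorProduct.assoc ℂ V V V).symm.toLinearMap
        (LinearMap.range (TensorProduct.mapIncl (⊤ : Submodule ℂ V)
          (LinearMap.ker (mu2 mulD3)))) ≤
      LinearMap.ker (mu3 mulD3) := by
  rintro _ ⟨_, ⟨u, rfl⟩, rfl⟩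
  rw [LinearMap.mem_ker]
  induction u using TensorProduct.induction_on with
  | zero => rw [map_zero, map_zero, map_zero]
  | add a b ha hb => rw [map_add, map_add, map_add, ha, hb, add_zero]
  | tmul a s =>
    show mu3 mulD3 ((TensorProduct.assoc ℂ V V V).symm ((a : V) ⊗ₜ[ℂ] (s : V ⊗[ℂ] V))) = 0
    rw [L_D3, LinearMap.mem_ker.mp s.2]
    simp

lemma sup2_le_D4 :
    Submodule.map (TensorProduct.assoc ℂ V V V).symm.toLinearMap
        (LinearMap.range (TensorProduct.mapIncl (⊤ : Submodule ℂ V)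
          (LinearMap.ker (mu2 mulD4)))) ≤
      LinearMap.ker (mu3 mulD4) := by
  rintro _ ⟨_, ⟨u, rfl⟩, rfl⟩
  rw [LinearMap.mem_ker]
  induction u using TensorProduct.induction_on with
  | zero => rw [map_zero, map_zero, map_zero]
  | add a b ha hb => rw [map_add, map_add, map_add, ha, hb, add_zero]
  | tmul a s =>
    show mu3 mulD4 ((TensorProduct.assoc ℂ V V V).symm ((a : V) ⊗ₜ[ℂ] (s : V ⊗[ℂ] V))) = 0
    rw [L_D4, LinearMap.mem_ker.mp s.2]
    simp

lemma ker1_D3 (x y : V) : x ⊗ₜ[ℂ] (y - y 0 • e0) ∈ LinearMap.ker (mu2 mulD3) := by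
  rw [LinearMap.mem_ker, mu2_D3]
  simp [e0_zero]

lemma ker2_D3 (z : V) : e0 ⊗ₜ[ℂ] (z - z 0 • e0) ∈ LinearMap.ker (mu2 mulD3) := by
  rw [LinearMap.mem_ker, mu2_D3]
  simp [e0_zero]

lemma ker1_D4 (x y : V) : (x - x 0 • e0) ⊗ₜ[ℂ] y ∈ LinearMap.ker (mu2 mulD4) := by
  rw [LinearMap.mem_ker, mu2_D4]
  simp [e0_zero]

lemma ker2_D4 (y z : V) : (y - y 0 • e0) ⊗ₜ[ℂ] z ∈ LinearMap.ker (mu2 mulD4) := by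
  rw [LinearMap.mem_ker, mu2_D4]
  simp [e0_zero]

noncomputable def σ3 : V →ₗ[ℂ] (V ⊗[ℂ] V) ⊗[ℂ] V :=
  ((TensorProduct.mk ℂ (V ⊗[ℂ] V) V).flip e0).comp ((TensorProduct.mk ℂ V V).flip e0)

lemma σ3_apply (v : V) : σ3 v = (v ⊗ₜ[ℂ] e0) ⊗ₜ[ℂ] e0 := rfl

noncomputable def σ4 : V →ₗ[ℂ] (V ⊗[ℂ] V) ⊗[ℂ] V :=
  TensorProduct.mk ℂ (V ⊗[ℂ] V) V (e0 ⊗ₜ[ℂ] e0)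

lemma σ4_apply (v : V) : σ4 v = (e0 ⊗ₜ[ℂ] e0) ⊗ₜ[ℂ] v := rfl

lemma key_D3 (t : (V ⊗[ℂ] V) ⊗[ℂ] V) : t - σ3 (mu3 mulD3 t) ∈ RHS mulD3 := by
  induction t using TensorProduct.induction_on with
  | zero => rw [map_zero, map_zero]; simpa using zero_mem _
  | add a b ha hb =>
    have h := Submodule.add_mem _ ha hb
    rw [map_add, map_add]
    convert h using 1
    abel
  | tmul s z =>
    induction s using TensorProduct.induction_on with
    | zero => rw [zero_tmul, map_zero, map_zero]; simpa using zero_mem _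
    | add s1 s2 h1 h2 =>
      have h := Submodule.add_mem _ h1 h2
      rw [add_tmul, map_add, map_add]
      convert h using 1
      abel
    | tmul x y =>
      rw [mu3_D3, map_smul, σ3_apply]
      have hdecomp : (x ⊗ₜ[ℂ] y) ⊗ₜ[ℂ] z - (z 0 * y 0) • ((x ⊗ₜ[ℂ] e0) ⊗ₜ[ℂ] e0) =
          (x ⊗ₜ[ℂ] (y - y 0 • e0)) ⊗ₜ[ℂ] z +
            ((y 0 • x) ⊗ₜ[ℂ] e0) ⊗ₜ[ℂ] (z - z 0 • e0) := by
        simp only [tmul_sub, sub_tmul, tmul_smul, smul_tmul', smul_smul]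
        abel
      rw [hdecomp]
      refine Submodule.add_mem _ (Submodule.mem_sup_left (mem1 _ (ker1_D3 x y) z)) ?_
      rw [← TensorProduct.assoc_symm_tmul]
      exact Submodule.mem_sup_right (mem2 _ _ (ker2_D3 z))

lemma key_D4 (t : (V ⊗[ℂ] V) ⊗[ℂ] V) : t - σ4 (mu3 mulD4 t) ∈ RHS mulD4 := by
  induction t using TensorProduct.induction_on with
  | zero => rw [map_zero, map_zero]; simpa using zero_mem _
  | add a b ha hb =>
    have h := Submodule.add_mem _ ha hb
    rw [map_add, map_add]
    convert h using 1
    abel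
  | tmul s z =>
    induction s using TensorProduct.induction_on with
    | zero => rw [zero_tmul, map_zero, map_zero]; simpa using zero_mem _
    | add s1 s2 h1 h2 =>
      have h := Submodule.add_mem _ h1 h2
      rw [add_tmul, map_add, map_add]
      convert h using 1
      abel
    | tmul x y =>
      rw [mu3_D4, map_smul, σ4_apply]
      have hdecomp : (x ⊗ₜ[ℂ] y) ⊗ₜ[ℂ] z - (x 0 * y 0) • ((e0 ⊗ₜ[ℂ] e0) ⊗ₜ[ℂ] z) =
          ((x - x 0 • e0) ⊗ₜ[ℂ] y) ⊗ₜ[ℂ] z +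
            ((x 0 • e0) ⊗ₜ[ℂ] (y - y 0 • e0)) ⊗ₜ[ℂ] z := by
        rw [mul_comm (x 0) (y 0)]
        simp only [tmul_sub, sub_tmul, tmul_smul, smul_tmul', smul_smul]
        abel
      rw [hdecomp]
      refine Submodule.add_mem _ (Submodule.mem_sup_left (mem1 _ (ker1_D4 x y) z)) ?_
      rw [← TensorProduct.assoc_symm_tmul]
      exact Submodule.mem_sup_right (mem2 _ _ (ker2_D4 y z))

theorem stmt_18 : KerProp mulD3 ∧ KerProp mulD4 := by
  constructor
  · apply le_antisymm
    · intro t ht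
      have h := key_D3 t
      rw [LinearMap.mem_ker.mp ht, map_zero] at h
      exact sub_zero t ▸ h
    · exact sup_le (sup1_le mulD3) sup2_le_D3
  · apply le_antisymm
    · intro t ht
      have h := key_D4 t
      rw [LinearMap.mem_ker.mp ht, map_zero] at h
      exact sub_zero t ▸ h
    · exact sup_le (sup1_le mulD4) sup2_le_D4

end Stmt18
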